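/- Let A = UΣUᵀ be the ground truth from the context, let r ≥ r_A, let X ∈ St(m,r), let Δ ∈ ℝ^{m×m} be any matrix, and set Θ = XᵀAX − XᵀΔX. If ρ ≥ 0 and Tr(I_{r_A} − UᵀXXᵀU) ≤ ρ, then ‖XΘXᵀ − A‖_F ≤ 2√ρ + ‖Δ‖_F. -/

import Mathlib

open Matrix MeasureTheory ProbabilityTheory BigOperators

noncomputable section

/-- Frobenius norm of a real matrix. -/
def frob {m n : ℕ} (M : Matrix (Fin m) (Fin n) ℝ) : ℝ :=
  Real.sqrt (∑ i, ∑ j, (M i j) ^ 2)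

/-- Euclidean norm of a vector in `ℝⁿ`. -/
def vnorm {n : ℕ} (v : Fin n → ℝ) : ℝ :=
  Real.sqrt (∑ i, (v i) ^ 2)

/-- Spectral norm (operator 2-norm) of a real matrix. -/
def spec {m n : ℕ} (M : Matrix (Fin m) (Fin n) ℝ) : ℝ :=
  ‖LinearMap.toContinuousLinearMap (Matrix.toEuclideanLin M)‖

theorem isHermitian_tmul {m n : ℕ} (M : Matrix (Fin m) (Fin n) ℝ) :
    (Mᵀ * M).IsHermitian := by
  simpa [Matrix.conjTranspose_eq_transpose_of_trivial] using
    Matrix.isHermitian_conjTranspose_mul_self M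

theorem posSemidef_tmul {m n : ℕ} (M : Matrix (Fin m) (Fin n) ℝ) :
    (Mᵀ * M).PosSemidef := by
  simpa [Matrix.conjTranspose_eq_transpose_of_trivial] using
    Matrix.posSemidef_conjTranspose_mul_self M

/-- The `i`-th largest singular value (1-indexed) of a real matrix, i.e. the square root of the
`i`-th largest eigenvalue of `MᵀM`; junk value `0` when `i` is out of range. -/
def svalue {m n : ℕ} (M : Matrix (Fin m) (Fin n) ℝ) (i : ℕ) : ℝ :=
  if h : 1 ≤ i ∧ i ≤ n then
    Real.sqrt ((isHermitian_tmul M).eigenvalues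
      (Tuple.sort (isHermitian_tmul M).eigenvalues ⟨n - i, by omega⟩))
  else 0

/-- Membership in the Stiefel manifold `St(m,r)`. -/
def Stiefel {m r : ℕ} (X : Matrix (Fin m) (Fin r) ℝ) : Prop :=
  Xᵀ * X = 1

/-- The Loewner order on (symmetric) real matrices: `A ⪯ B`. -/
def loewnerLE {m : ℕ} (A B : Matrix (Fin m) (Fin m) ℝ) : Prop :=
  (B - A).PosSemidef

/-- The inverse of the positive semidefinite square root of a matrix (junk value `0` when the
matrix is not positive semidefinite). -/
def sqrtInv {r : ℕ} (S : Matrix (Fin r) (Fin r) ℝ) : Matrix (Fin r) (Fin r) ℝ :=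
  haveI := Classical.propDecidable S.PosSemidef
  if h : S.PosSemidef then
    (h.1.eigenvectorUnitary.1 * diagonal (RCLike.ofReal ∘ Real.sqrt ∘ h.1.eigenvalues) *
      (star h.1.eigenvectorUnitary : Matrix (Fin r) (Fin r) ℝ))⁻¹ else 0

/-- The linear sensing map `𝓜` determined by feature matrices `M_i`:
`𝓜(B)_i = Tr(M_iᵀ B)`. -/
def calM {m n : ℕ} (Ms : Fin n → Matrix (Fin m) (Fin m) ℝ)
    (B : Matrix (Fin m) (Fin m) ℝ) : Fin n → ℝ :=
  fun i => ((Ms i)ᵀ * B).trace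

/-- The adjoint `𝓜*` of the sensing map: `𝓜*(y) = ∑ i, y_i M_i`. -/
def calMadj {m n : ℕ} (Ms : Fin n → Matrix (Fin m) (Fin m) ℝ)
    (y : Fin n → ℝ) : Matrix (Fin m) (Fin m) ℝ :=
  ∑ i, y i • Ms i

/-- `(𝓜*𝓜 − 𝓘)(B)`. -/
def calE {m n : ℕ} (Ms : Fin n → Matrix (Fin m) (Fin m) ℝ)
    (B : Matrix (Fin m) (Fin m) ℝ) : Matrix (Fin m) (Fin m) ℝ :=
  calMadj Ms (calM Ms B) - B

/-- The `(s, δ)`-restricted isometry property for the sensing map determined by `Ms`. -/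
def IsRIP {m n : ℕ} (Ms : Fin n → Matrix (Fin m) (Fin m) ℝ) (s : ℕ) (δ : ℝ) : Prop :=
  ∀ B : Matrix (Fin m) (Fin m) ℝ, B.IsSymm → B.rank ≤ s →
    (1 - δ) * frob B ^ 2 ≤ vnorm (calM Ms B) ^ 2 ∧
      vnorm (calM Ms B) ^ 2 ≤ (1 + δ) * frob B ^ 2

/-- The Riemannian gradient on the Stiefel manifold obtained from the Euclidean gradient `g`
at the point `X`. -/
def Rgrad {m r : ℕ} (X g : Matrix (Fin m) (Fin r) ℝ) : Matrix (Fin m) (Fin r) ℝ :=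
  (1 - X * Xᵀ) * g + (2⁻¹ : ℝ) • (X * (Xᵀ * g - gᵀ * X))

/-- One step of Riemannian gradient descent (with `μ = 2`) for the weight-normalized
matrix sensing problem. -/
def RGDstep {m r n : ℕ} (Ms : Fin n → Matrix (Fin m) (Fin m) ℝ)
    (A : Matrix (Fin m) (Fin m) ℝ) (η : ℝ)
    (p : Matrix (Fin m) (Fin r) ℝ × Matrix (Fin r) (Fin r) ℝ) :
    Matrix (Fin m) (Fin r) ℝ × Matrix (Fin r) (Fin r) ℝ :=
  let X := p.1
  let Θ := p.2
  let Gt := calMadj Ms (calM Ms (X * Θ * Xᵀ - A)) * X * Θ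
  let G := Rgrad X Gt
  let X' := (X - η • G) * sqrtInv (1 + η ^ 2 • (Gᵀ * G))
  let Θ' := X'ᵀ * A * X' - X'ᵀ * calE Ms (X' * Θ * X'ᵀ - A) * X'
  (X', Θ')

/-- The standard Gaussian ensemble on `m × r` real matrices (i.i.d. `N(0,1)` entries). -/
def gaussianEnsemble (m r : ℕ) : Measure (Fin m → Fin r → ℝ) :=
  Measure.pi fun _ : Fin m => Measure.pi fun _ : Fin r => gaussianReal 0 1

end

noncomputable section

/-!
Write `P = X Xᵀ`, the orthogonal projection onto the column space of `X`. Then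
`X Θ Xᵀ - A = -P A (1 - P) - (1 - P) A - P Δ P`, and since `P` does not increase Frobenius norms,
`‖X Θ Xᵀ - A‖_F ≤ 2 ‖(1 - P) A‖_F + ‖Δ‖_F`. Finally
`‖(1 - P) A‖_F² = Tr(Σ Uᵀ(1 - P)U Σ) ≤ Tr(Uᵀ(1 - P)U) = Tr(I - UᵀXXᵀU) ≤ ρ`,
because `Uᵀ(1 - P)U` is positive semidefinite and the squared diagonal entries of `Σ` are
eigenvalues of `ΣᵀΣ`, hence at most `σ₁(Σ)² = 1`.
-/

section Frobenius

variable {m n : ℕ}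

lemma frob_sq (M : Matrix (Fin m) (Fin n) ℝ) : frob M ^ 2 = (Mᵀ * M).trace := by
  rw [frob, Real.sq_sqrt (by positivity), Matrix.trace]
  simp only [Matrix.diag, Matrix.mul_apply, Matrix.transpose_apply, sq]
  exact Finset.sum_comm

lemma frob_le_frob_of_trace_le {B C : Matrix (Fin m) (Fin n) ℝ}
    (h : (Bᵀ * B).trace ≤ (Cᵀ * C).trace) : frob B ≤ frob C := by
  rw [← frob_sq, ← frob_sq] at h
  exact pow_le_pow_iff_left₀ (Real.sqrt_nonneg _) (Real.sqrt_nonneg _) two_ne_zero |>.mp h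

lemma frob_transpose (M : Matrix (Fin m) (Fin n) ℝ) : frob Mᵀ = frob M := by
  rw [frob, frob, Finset.sum_comm]
  rfl

lemma frob_neg (M : Matrix (Fin m) (Fin n) ℝ) : frob (-M) = frob M := by
  simp [frob]

section
attribute [local instance] Matrix.frobeniusNormedAddCommGroup

lemma frob_eq_norm (M : Matrix (Fin m) (Fin n) ℝ) : frob M = ‖M‖ := by
  simp only [frob, frobenius_norm_def, Real.norm_eq_abs, Real.rpow_two, sq_abs,
    Real.sqrt_eq_rpow, one_div]

lemma frob_add_le (B C : Matrix (Fin m) (Fin n) ℝ) : frob (B + C) ≤ frob B + frob C := by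
  simpa only [frob_eq_norm] using norm_add_le B C

end

lemma frob_sub_le (B C : Matrix (Fin m) (Fin n) ℝ) : frob (B - C) ≤ frob B + frob C := by
  simpa only [sub_eq_add_neg, frob_neg] using frob_add_le B (-C)

end Frobenius

lemma eigenvalues_tmul_le_svalue_one_sq {m n : ℕ} (M : Matrix (Fin m) (Fin n) ℝ)
    (hn : 1 ≤ n) (j : Fin n) : (isHermitian_tmul M).eigenvalues j ≤ svalue M 1 ^ 2 := by
  set σ := Tuple.sort (isHermitian_tmul M).eigenvalues
  have hmax : (isHermitian_tmul M).eigenvalues j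
      ≤ (isHermitian_tmul M).eigenvalues (σ ⟨n - 1, by omega⟩) := by
    have := Tuple.monotone_sort (isHermitian_tmul M).eigenvalues
      (show σ.symm j ≤ ⟨n - 1, by omega⟩ from Nat.le_sub_one_of_lt (σ.symm j).isLt)
    simpa only [Function.comp_apply, σ, Equiv.apply_symm_apply] using this
  rw [svalue, dif_pos ⟨le_rfl, hn⟩, Real.sq_sqrt ((posSemidef_tmul M).eigenvalues_nonneg _)]
  exact hmax

lemma sq_le_one_of_svalue_diagonal_eq_one {k : ℕ} {d : Fin k → ℝ}
    (h : svalue (diagonal d) 1 = 1) (i : Fin k) : d i ^ 2 ≤ 1 := by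
  have hk : 1 ≤ k := by
    by_contra hk
    simp [svalue, hk] at h
  have hspec : d i ^ 2 ∈ spectrum ℝ ((diagonal d)ᵀ * diagonal d) := by
    rw [diagonal_transpose, diagonal_mul_diagonal, spectrum_diagonal]
    exact ⟨i, (sq (d i)).symm⟩
  obtain ⟨j, hj⟩ := (isHermitian_tmul _).spectrum_real_eq_range_eigenvalues ▸ hspec
  simpa [← hj, h] using eigenvalues_tmul_le_svalue_one_sq (diagonal d) hk j

lemma trace_diagonal_mul_mul_diagonal_le {k : ℕ} {d : Fin k → ℝ} (hd : ∀ i, d i ^ 2 ≤ 1)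
    {M : Matrix (Fin k) (Fin k) ℝ} (hM : M.PosSemidef) :
    (diagonal d * M * diagonal d).trace ≤ M.trace := by
  refine Finset.sum_le_sum fun i _ => ?_
  have hMii : 0 ≤ M i i := hM.diag_nonneg
  simp only [diag, mul_diagonal, diagonal_mul]
  nlinarith [hd i]

namespace Stiefel

variable {m r : ℕ} {X : Matrix (Fin m) (Fin r) ℝ}

lemma proj_mul_proj (hX : Stiefel X) : X * Xᵀ * (X * Xᵀ) = X * Xᵀ := by
  rw [Matrix.mul_assoc, ← Matrix.mul_assoc Xᵀ, hX, Matrix.one_mul]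

lemma transpose_one_sub_proj_mul (hX : Stiefel X) :
    (1 - X * Xᵀ)ᵀ * (1 - X * Xᵀ) = 1 - X * Xᵀ := by
  simp only [transpose_sub, transpose_one, transpose_mul, transpose_transpose, Matrix.sub_mul,
    Matrix.mul_sub, Matrix.one_mul, Matrix.mul_one, hX.proj_mul_proj]
  abel

lemma posSemidef_one_sub_proj (hX : Stiefel X) : (1 - X * Xᵀ).PosSemidef :=
  hX.transpose_one_sub_proj_mul ▸ posSemidef_tmul (1 - X * Xᵀ)

lemma frob_proj_mul_le (hX : Stiefel X) {k : ℕ} (M : Matrix (Fin m) (Fin k) ℝ) :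
    frob (X * Xᵀ * M) ≤ frob M := by
  apply frob_le_frob_of_trace_le
  have hgap : Mᵀ * M - (X * Xᵀ * M)ᵀ * (X * Xᵀ * M) = Mᵀ * (1 - X * Xᵀ) * M := by
    simp only [transpose_mul, transpose_transpose, Matrix.mul_assoc]
    rw [← Matrix.mul_assoc Xᵀ X, hX, Matrix.one_mul]
    simp only [Matrix.mul_sub, Matrix.sub_mul, Matrix.one_mul, Matrix.mul_assoc]
  have := (hX.posSemidef_one_sub_proj.conjTranspose_mul_mul_same M).trace_nonneg
  rw [conjTranspose_eq_transpose_of_trivial, ← hgap, trace_sub] at this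
  linarith

lemma frob_mul_proj_le (hX : Stiefel X) {k : ℕ} (M : Matrix (Fin k) (Fin m) ℝ) :
    frob (M * (X * Xᵀ)) ≤ frob M := by
  rw [← frob_transpose, ← frob_transpose M, transpose_mul, transpose_mul, transpose_transpose]
  exact hX.frob_proj_mul_le Mᵀ

lemma frob_compress_sub_le (hX : Stiefel X) {A : Matrix (Fin m) (Fin m) ℝ} (hA : Aᵀ = A)
    (Δ : Matrix (Fin m) (Fin m) ℝ) :
    frob (X * (Xᵀ * A * X - Xᵀ * Δ * X) * Xᵀ - A) ≤ 2 * frob ((1 - X * Xᵀ) * A) + frob Δ := by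
  set P := X * Xᵀ
  have hdecomp : X * (Xᵀ * A * X - Xᵀ * Δ * X) * Xᵀ - A
      = -(P * (((1 - P) * A)ᵀ)) - (1 - P) * A - P * (Δ * P) := by
    simp only [P, transpose_mul, hA, transpose_sub, transpose_transpose, Matrix.mul_sub,
      Matrix.sub_mul, Matrix.one_mul, Matrix.mul_assoc]
    abel
  have h₁ : frob (P * ((1 - P) * A)ᵀ) ≤ frob ((1 - P) * A) :=
    (hX.frob_proj_mul_le _).trans (frob_transpose _).le
  have h₂ : frob (P * (Δ * P)) ≤ frob Δ :=
    (hX.frob_proj_mul_le _).trans (hX.frob_mul_proj_le Δ)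
  rw [hdecomp]
  linarith [frob_sub_le (-(P * ((1 - P) * A)ᵀ) - (1 - P) * A) (P * (Δ * P)),
    frob_sub_le (-(P * ((1 - P) * A)ᵀ)) ((1 - P) * A), frob_neg (P * ((1 - P) * A)ᵀ)]

lemma frob_one_sub_proj_mul_sq_le (hX : Stiefel X) {k : ℕ} {U : Matrix (Fin m) (Fin k) ℝ}
    (hU : Stiefel U) {d : Fin k → ℝ} (hd : ∀ i, d i ^ 2 ≤ 1) :
    frob ((1 - X * Xᵀ) * (U * diagonal d * Uᵀ)) ^ 2 ≤ (1 - Uᵀ * X * Xᵀ * U).trace := by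
  set M := Uᵀ * (1 - X * Xᵀ) * U
  have hM : M = 1 - Uᵀ * X * Xᵀ * U := by
    show Uᵀ * (1 - X * Xᵀ) * U = _
    rw [Matrix.mul_sub, Matrix.sub_mul, Matrix.mul_one, hU]
    simp only [Matrix.mul_assoc]
  have hgram : ((1 - X * Xᵀ) * (U * diagonal d * Uᵀ))ᵀ * ((1 - X * Xᵀ) * (U * diagonal d * Uᵀ))
      = U * (diagonal d * M * diagonal d * Uᵀ) := by
    rw [transpose_mul, Matrix.mul_assoc, ← Matrix.mul_assoc (1 - X * Xᵀ)ᵀ,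
      hX.transpose_one_sub_proj_mul]
    simp only [M, transpose_mul, transpose_transpose, diagonal_transpose, Matrix.mul_assoc]
  rw [frob_sq, hgram, trace_mul_comm, Matrix.mul_assoc, hU, Matrix.mul_one, ← hM]
  exact trace_diagonal_mul_mul_diagonal_le hd
    (hX.posSemidef_one_sub_proj.conjTranspose_mul_mul_same U)

end Stiefel

theorem stmt3_general {m r r_A : ℕ}
    (U : Matrix (Fin m) (Fin r_A) ℝ) (hU : Stiefel U)
    (d : Fin r_A → ℝ)
    (Sg : Matrix (Fin r_A) (Fin r_A) ℝ) (hSg : Sg = Matrix.diagonal d)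
    (hσ1 : svalue Sg 1 = 1)
    (A : Matrix (Fin m) (Fin m) ℝ) (hA : A = U * Sg * Uᵀ)
    (X : Matrix (Fin m) (Fin r) ℝ) (hX : Stiefel X)
    (Δ : Matrix (Fin m) (Fin m) ℝ)
    (Θ : Matrix (Fin r) (Fin r) ℝ) (hΘ : Θ = Xᵀ * A * X - Xᵀ * Δ * X)
    (ρ : ℝ)
    (htr : (1 - Uᵀ * X * Xᵀ * U).trace ≤ ρ) :
    frob (X * Θ * Xᵀ - A) ≤ 2 * Real.sqrt ρ + frob Δ := by
  subst hSg hA hΘ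
  have hd : ∀ i, d i ^ 2 ≤ 1 := sq_le_one_of_svalue_diagonal_eq_one hσ1
  have hsymm : (U * diagonal d * Uᵀ)ᵀ = U * diagonal d * Uᵀ := by
    simp only [transpose_mul, transpose_transpose, diagonal_transpose, Matrix.mul_assoc]
  have hres : frob ((1 - X * Xᵀ) * (U * diagonal d * Uᵀ)) ≤ Real.sqrt ρ :=
    Real.le_sqrt_of_sq_le ((hX.frob_one_sub_proj_mul_sq_le hU hd).trans htr)
  linarith [hX.frob_compress_sub_le hsymm Δ]

theorem stmt3 {m r r_A : ℕ} (h1 : 1 ≤ r_A) (h2 : r_A ≤ r)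
    (κ : ℝ) (hκ : 1 ≤ κ)
    (U : Matrix (Fin m) (Fin r_A) ℝ) (hU : Stiefel U)
    (d : Fin r_A → ℝ) (hd : ∀ i, 0 < d i)
    (Sg : Matrix (Fin r_A) (Fin r_A) ℝ) (hSg : Sg = Matrix.diagonal d)
    (hσ1 : svalue Sg 1 = 1) (hσr : svalue Sg r_A = 1 / κ)
    (A : Matrix (Fin m) (Fin m) ℝ) (hA : A = U * Sg * Uᵀ)
    (X : Matrix (Fin m) (Fin r) ℝ) (hX : Stiefel X)
    (Δ : Matrix (Fin m) (Fin m) ℝ)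
    (Θ : Matrix (Fin r) (Fin r) ℝ) (hΘ : Θ = Xᵀ * A * X - Xᵀ * Δ * X)
    (ρ : ℝ) (hρ : 0 ≤ ρ)
    (htr : (1 - Uᵀ * X * Xᵀ * U).trace ≤ ρ) :
    frob (X * Θ * Xᵀ - A) ≤ 2 * Real.sqrt ρ + frob Δ :=
  stmt3_general U hU d Sg hSg hσ1 A hA X hX Δ Θ hΘ ρ htr

end
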